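/- Let u : ℝ → ℝ be continuous and 2π-periodic with ∫_{−π}^{π} u(x) dx = 0, and let X ∈ ℝ be a point where u attains its global maximum. Then, interpreting the integral of the nonnegative integrand in [0,+∞], (1/(4π)) ∫_{−π}^{π} ( u(X) − u(X−η) ) / sin²(η/2) dη ≥ u(X)/2. In particular, if the periodic fractional Laplacian Λu(X) := (1/(4π))·lim_{ε→0⁺} ∫_{ε<|η|<π} (u(X)−u(X−η))/sin²(η/2) dη exists, then Λu(X) ≥ u(X)/2. -/

import Mathlib

/-!
With `g η := u X - u (X - η) ≥ 0`, periodicity and zero mean give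
`∫_{-π}^{π} g = 2π u X`. Since `sin² ≤ 1`, the integrand `g η / sin² (η / 2)` dominates `g η`,
so the full integral and every truncation `∫_{ε < |η| < π}` dominate the corresponding integral
of `g`; the truncated integrals of `g` tend to `2π u X` as `ε → 0` by absolute continuity of
the integral.
-/

open MeasureTheory Filter Set

/-- The truncated principal-value integral for the periodic fractional Laplacian. -/
noncomputable def pvIntegralT (u : ℝ → ℝ) (x ε : ℝ) : ℝ :=
  (1 / (4 * Real.pi)) *
    ∫ η in {η : ℝ | ε < |η| ∧ |η| < Real.pi}, (u x - u (x - η)) / Real.sin (η / 2) ^ 2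

/-- `Λu(x) = L` in the periodic principal-value sense. -/
def HasPVLambdaT (u : ℝ → ℝ) (x L : ℝ) : Prop :=
  Tendsto (fun ε => pvIntegralT u x ε) (nhdsWithin 0 (Set.Ioi 0)) (nhds L)

open Metric Topology Real

theorem Function.Periodic.intervalIntegral_comp_sub_left {E : Type*} [NormedAddCommGroup E]
    [NormedSpace ℝ E] {u : ℝ → E} {T : ℝ} (hu : Function.Periodic u T) (X a : ℝ) :
    ∫ η in a..a + T, u (X - η) = ∫ x in a..a + T, u x := by
  have h : X - a = X - (a + T) + T := by ring
  rw [intervalIntegral.integral_comp_sub_left, h, hu.intervalIntegral_add_eq]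

theorem setIntegral_Ioo_const_sub_comp_sub_of_periodic {u : ℝ → ℝ} (hc : Continuous u)
    (hper : Function.Periodic u (2 * π)) (hmean : ∫ x in -π..π, u x = 0) (c X : ℝ) :
    ∫ η in Ioo (-π) π, (c - u (X - η)) = 2 * π * c := by
  have hshift : ∫ η in -π..π, u (X - η) = 0 := by
    have h := hper.intervalIntegral_comp_sub_left X (-π)
    rwa [show -π + 2 * π = π by ring, hmean] at h
  have hint : IntervalIntegrable (fun η => u (X - η)) volume (-π) π :=
    (hc.comp (continuous_sub_left X)).intervalIntegrable _ _
  rw [← integral_Ioc_eq_integral_Ioo, ← intervalIntegral.integral_of_le (by linarith [pi_pos]),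
    intervalIntegral.integral_sub intervalIntegrable_const hint, hshift,
    intervalIntegral.integral_const, smul_eq_mul]
  ring

theorem Real.sin_half_ne_zero {η : ℝ} (h0 : η ≠ 0) (h : |η| < 2 * π) : sin (η / 2) ≠ 0 := by
  rw [abs_lt] at h
  rw [Ne, sin_eq_zero_iff_of_lt_of_lt (by linarith) (by linarith)]
  exact div_ne_zero h0 two_ne_zero

theorem le_div_sin_sq {a x : ℝ} (ha : 0 ≤ a) (hx : sin x ≠ 0) : a ≤ a / sin x ^ 2 :=
  le_div_self ha (by positivity) (sin_sq_le_one x)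

theorem ofReal_setIntegral_le_setLIntegral_div_sin_sq {g : ℝ → ℝ} (hg0 : 0 ≤ g)
    (hg : IntegrableOn g (Ioo (-π) π)) :
    ENNReal.ofReal (∫ η in Ioo (-π) π, g η) ≤
      ∫⁻ η in Ioo (-π) π, ENNReal.ofReal (g η / sin (η / 2) ^ 2) := by
  rw [ofReal_integral_eq_lintegral_ofReal hg (Eventually.of_forall hg0)]
  refine lintegral_mono_ae ?_
  filter_upwards [ae_restrict_mem measurableSet_Ioo,
    ae_restrict_of_ae (compl_mem_ae_iff.2 (measure_singleton (0 : ℝ)))] with η hη hη0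
  refine ENNReal.ofReal_le_ofReal (le_div_sin_sq (hg0 η) (sin_half_ne_zero hη0 ?_))
  rw [abs_lt]
  constructor <;> linarith [hη.1, hη.2, pi_pos]

theorem setOf_lt_abs_and_abs_lt_eq (ε r : ℝ) :
    {η : ℝ | ε < |η| ∧ |η| < r} = ball 0 r \ closedBall 0 ε := by
  ext η
  simp [and_comm]

theorem Real.sin_half_ne_zero_of_mem_closedBall_diff_ball {ε η : ℝ} (hε : 0 < ε)
    (hη : η ∈ closedBall 0 π \ ball 0 ε) : sin (η / 2) ≠ 0 := by
  simp only [Set.mem_sdiff, mem_closedBall_zero_iff, mem_ball_zero_iff, norm_eq_abs,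
    not_lt] at hη
  exact sin_half_ne_zero (abs_pos.1 (hε.trans_le hη.2)) (by linarith [pi_pos])

theorem setIntegral_le_setIntegral_div_sin_sq {g : ℝ → ℝ} (hg : Continuous g) (hg0 : 0 ≤ g)
    {ε : ℝ} (hε : 0 < ε) :
    ∫ η in ball 0 π \ closedBall 0 ε, g η ≤
      ∫ η in ball 0 π \ closedBall 0 ε, g η / sin (η / 2) ^ 2 := by
  have hsub : ball (0 : ℝ) π \ closedBall 0 ε ⊆ closedBall 0 π \ ball 0 ε :=
    sdiff_subset_sdiff ball_subset_closedBall ball_subset_closedBall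
  have hK : IsCompact (closedBall (0 : ℝ) π \ ball 0 ε) :=
    (isCompact_closedBall 0 π).diff isOpen_ball
  have hsin : ∀ η ∈ closedBall (0 : ℝ) π \ ball 0 ε, sin (η / 2) ≠ 0 :=
    fun _ hη => sin_half_ne_zero_of_mem_closedBall_diff_ball hε hη
  have hdiv : ContinuousOn (fun η => g η / sin (η / 2) ^ 2) (closedBall 0 π \ ball 0 ε) :=
    hg.continuousOn.div (by fun_prop) fun η hη => pow_ne_zero 2 (hsin η hη)
  exact setIntegral_mono_on ((hg.continuousOn.integrableOn_compact hK).mono_set hsub)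
    ((hdiv.integrableOn_compact hK).mono_set hsub)
    (measurableSet_ball.diff measurableSet_closedBall)
    fun η hη => le_div_sin_sq (hg0 η) (hsin η (hsub hη))

theorem tendsto_setIntegral_diff_closedBall {g : ℝ → ℝ} {s : Set ℝ} (hg : IntegrableOn g s)
    (x : ℝ) :
    Tendsto (fun ε => ∫ η in s \ closedBall x ε, g η) (𝓝 0) (𝓝 (∫ η in s, g η)) := by
  have hvol : Tendsto (fun ε => volume.restrict s (closedBall x ε)) (𝓝 0) (𝓝 0) := by
    refine tendsto_of_tendsto_of_tendsto_of_le_of_le tendsto_const_nhds ?_ (fun _ => zero_le)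
      fun ε => Measure.restrict_apply_le _ _
    simpa only [Real.volume_closedBall, Function.comp_def, mul_zero, ENNReal.ofReal_zero] using
      (ENNReal.continuous_ofReal.comp (continuous_const_mul 2)).tendsto 0
  have hinter : Tendsto (fun ε => ∫ η in s ∩ closedBall x ε, g η) (𝓝 0) (𝓝 0) := by
    simpa only [Measure.restrict_restrict measurableSet_closedBall, inter_comm]
      using hg.tendsto_setIntegral_nhds_zero hvol
  have hdiff := (tendsto_const_nhds (x := ∫ η in s, g η)).sub hinter
  rw [sub_zero] at hdiff
  refine hdiff.congr fun ε => ?_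
  rw [← integral_inter_add_sdiff measurableSet_closedBall hg, add_sub_cancel_left]

/-- at a global maximum `X` of a continuous, 2π-periodic, mean-zero
function `u`, the periodic fractional Laplacian satisfies `Λu(X) ≥ u(X)/2`, the integral
of the nonnegative integrand being interpreted in `[0,∞]`. -/
theorem lower_bound_at_maximum_periodic
    (u : ℝ → ℝ) (X : ℝ)
    (hc : Continuous u)
    (hper : ∀ x : ℝ, u (x + 2 * Real.pi) = u x)
    (hmean : (∫ x in (-Real.pi)..Real.pi, u x) = 0)
    (hmax : ∀ x : ℝ, u x ≤ u X) :
    ENNReal.ofReal (u X / 2) ≤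
        ENNReal.ofReal (1 / (4 * Real.pi)) *
          ∫⁻ η in Ioo (-Real.pi) Real.pi,
            ENNReal.ofReal ((u X - u (X - η)) / Real.sin (η / 2) ^ 2) ∧
      ∀ L : ℝ, HasPVLambdaT u X L → u X / 2 ≤ L := by
  set g : ℝ → ℝ := fun η => u X - u (X - η)
  have hg0 : 0 ≤ g := fun η => sub_nonneg.2 (hmax _)
  have hgc : Continuous g := by fun_prop
  have hgπ : ∫ η in Ioo (-π) π, g η = 2 * π * u X :=
    setIntegral_Ioo_const_sub_comp_sub_of_periodic hc hper hmean _ _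
  have hgint : IntegrableOn g (Ioo (-π) π) := hgc.integrableOn_Icc.mono_set Ioo_subset_Icc_self
  constructor
  · calc ENNReal.ofReal (u X / 2)
        = ENNReal.ofReal (1 / (4 * π)) * ENNReal.ofReal (∫ η in Ioo (-π) π, g η) := by
          rw [hgπ, ← ENNReal.ofReal_mul (by positivity)]
          field_simp
          ring_nf
      _ ≤ _ := by
          gcongr
          exact ofReal_setIntegral_le_setLIntegral_div_sin_sq hg0 hgint
  · intro L hL
    have hball : ball (0 : ℝ) π = Ioo (-π) π := by rw [Real.ball_eq_Ioo, zero_sub, zero_add]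
    have hlim : Tendsto (fun ε => 1 / (4 * π) * ∫ η in ball 0 π \ closedBall 0 ε, g η)
        (𝓝[>] 0) (𝓝 (u X / 2)) := by
      convert ((tendsto_setIntegral_diff_closedBall (hball ▸ hgint) 0).const_mul
        (1 / (4 * π))).mono_left nhdsWithin_le_nhds using 2
      rw [hball, hgπ]
      field_simp
      ring
    refine le_of_tendsto_of_tendsto hlim hL <|
      eventually_nhdsWithin_of_forall fun ε (hε : 0 < ε) => ?_
    dsimp only
    rw [pvIntegralT, setOf_lt_abs_and_abs_lt_eq]
    exact mul_le_mul_of_nonneg_left (setIntegral_le_setIntegral_div_sin_sq hgc hg0 hε)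
      (by positivity)
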